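/- Let μ be a probability measure on [0,1]^d whose pushforward under each coordinate projection v ↦ v_j is the uniform (Lebesgue) distribution on [0,1], and let A ⊆ {1,…,d} be nonempty. Then for every u ∈ [0,1]^d, |I_{μ,A}(u)| ≤ 1, where I_{μ,A}(u) = ∏_{l∈A}(1 − u_l) − ∫_{[0,1]^d} Σ_{j∈A} ∏_{l∈A\{j}} (1 − v_l) 1(u_j ≤ v_j) dμ(v). -/

import Mathlib

/-! Both terms lie in `[0, 1]`. For the integral, drop the indicators and apply AM–GM to each
product of `#A - 1` factors: on the cube the integrand is at most `∑ l ∈ A, (1 - v l) ^ (#A - 1)`,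
and since every margin is uniform each summand integrates to `1 / #A`. -/

open MeasureTheory Set Finset

lemma card_mul_prod_le_sum_pow_card {ι : Type*} (s : Finset ι) {a : ι → ℝ}
    (ha : ∀ i ∈ s, 0 ≤ a i) :
    #s * ∏ i ∈ s, a i ≤ ∑ i ∈ s, a i ^ #s := by
  rcases s.eq_empty_or_nonempty with rfl | hs
  · simp
  have hcard : #s ≠ 0 := hs.card_pos.ne'
  have amgm := Real.geom_mean_le_arith_mean_weighted s (fun _ => (#s : ℝ)⁻¹)
    (fun i => a i ^ #s) (fun _ _ => by positivity) (by simp [hcard])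
    (fun i hi => pow_nonneg (ha i hi) _)
  rw [prod_congr rfl fun i hi => Real.pow_rpow_inv_natCast (ha i hi) hcard, ← mul_sum] at amgm
  rwa [le_inv_mul_iff₀ (by positivity)] at amgm

lemma sum_prod_erase_le_sum_pow {ι : Type*} [DecidableEq ι] (s : Finset ι) {x : ι → ℝ}
    (hx : ∀ i ∈ s, 0 ≤ x i) :
    ∑ j ∈ s, ∏ l ∈ s.erase j, x l ≤ ∑ l ∈ s, x l ^ (#s - 1) := by
  have hcard : ∀ j ∈ s, #(s.erase j) = #s - 1 := fun j hj => card_erase_of_mem hj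
  rcases Nat.eq_zero_or_pos (#s - 1) with hn | hn
  · have hempty : ∀ j ∈ s, s.erase j = ∅ := fun j hj => card_eq_zero.1 ((hcard j hj).trans hn)
    refine le_of_eq ?_
    rw [hn, sum_congr rfl fun j hj => by rw [hempty j hj, Finset.prod_empty]]
    simp
  have hn' : ((#s - 1 : ℕ) : ℝ) = #s - 1 := by
    rw [Nat.cast_sub (by omega), Nat.cast_one]
  refine le_of_mul_le_mul_left ?_ (by exact_mod_cast hn : (0 : ℝ) < (#s - 1 : ℕ))
  calc ((#s - 1 : ℕ) : ℝ) * ∑ j ∈ s, ∏ l ∈ s.erase j, x l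
      = ∑ j ∈ s, #(s.erase j) * ∏ l ∈ s.erase j, x l := by
        rw [mul_sum]
        exact sum_congr rfl fun j hj => by rw [hcard j hj]
    _ ≤ ∑ j ∈ s, ∑ l ∈ s.erase j, x l ^ (#s - 1) := sum_le_sum fun j hj => by
        simpa only [hcard j hj] using
          card_mul_prod_le_sum_pow_card (s.erase j) fun l hl => hx l (mem_of_mem_erase hl)
    _ = ((#s - 1 : ℕ) : ℝ) * ∑ l ∈ s, x l ^ (#s - 1) := by
        rw [sum_congr rfl fun j hj => sum_erase_eq_sub hj, sum_sub_distrib, sum_const,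
          nsmul_eq_mul, hn']
        ring

lemma sum_prod_erase_mul_mem_Icc {ι : Type*} [DecidableEq ι] (s : Finset ι) {x c : ι → ℝ}
    (hx : ∀ i ∈ s, 0 ≤ x i) (hc : ∀ i ∈ s, c i ∈ Icc (0 : ℝ) 1) :
    ∑ j ∈ s, (∏ l ∈ s.erase j, x l) * c j ∈ Icc 0 (∑ l ∈ s, x l ^ (#s - 1)) := by
  have hprod : ∀ j, 0 ≤ ∏ l ∈ s.erase j, x l := fun j =>
    prod_nonneg fun l hl => hx l (mem_of_mem_erase hl)
  refine ⟨sum_nonneg fun j hj => mul_nonneg (hprod j) (hc j hj).1, ?_⟩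
  calc ∑ j ∈ s, (∏ l ∈ s.erase j, x l) * c j ≤ ∑ j ∈ s, ∏ l ∈ s.erase j, x l :=
        sum_le_sum fun j hj => mul_le_of_le_one_right (hprod j) (hc j hj).2
    _ ≤ ∑ l ∈ s, x l ^ (#s - 1) := sum_prod_erase_le_sum_pow s hx

section

variable {Ω β : Type*} [MeasurableSpace Ω] [MeasurableSpace β] {μ : Measure Ω} {ν : Measure β}
  {f : Ω → β} {s : Set β}

lemma ae_mem_of_map_eq_restrict (hf : AEMeasurable f μ) (hs : MeasurableSet s)
    (hmap : μ.map f = ν.restrict s) : ∀ᵐ ω ∂μ, f ω ∈ s :=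
  ae_of_ae_map hf (hmap ▸ ae_restrict_mem hs)

lemma integrable_comp_of_map_eq_restrict (hf : AEMeasurable f μ)
    (hmap : μ.map f = ν.restrict s) {φ : β → ℝ} (hφ : IntegrableOn φ s ν) :
    Integrable (fun ω => φ (f ω)) μ :=
  (hmap ▸ hφ : Integrable φ (μ.map f)).comp_aemeasurable hf

lemma integral_comp_of_map_eq_restrict (hf : AEMeasurable f μ)
    (hmap : μ.map f = ν.restrict s) {φ : β → ℝ} (hφ : IntegrableOn φ s ν) :
    ∫ ω, φ (f ω) ∂μ = ∫ x in s, φ x ∂ν := by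
  rw [← hmap, integral_map hf (hmap ▸ hφ.aestronglyMeasurable)]

end

lemma integral_Icc_one_sub_pow (n : ℕ) : ∫ x in Icc (0 : ℝ) 1, (1 - x) ^ n = 1 / (n + 1) := by
  rw [integral_Icc_eq_integral_Ioc, ← intervalIntegral.integral_of_le zero_le_one,
    intervalIntegral.integral_comp_sub_left (fun x => x ^ n), integral_pow]
  norm_num

lemma integrableOn_Icc_one_sub_pow (n : ℕ) : IntegrableOn (fun x : ℝ => (1 - x) ^ n) (Icc 0 1) :=
  (by fun_prop : Continuous fun x : ℝ => (1 - x) ^ n).integrableOn_Icc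

section

variable {ι : Type*} {μ : Measure (ι → ℝ)}

lemma integrable_sum_one_sub_pow
    (hmarg : ∀ l, μ.map (fun v => v l) = volume.restrict (Icc 0 1)) (A : Finset ι) (n : ℕ) :
    Integrable (fun v => ∑ l ∈ A, (1 - v l) ^ n) μ :=
  integrable_finsetSum A fun l _ => integrable_comp_of_map_eq_restrict
    (measurable_pi_apply l).aemeasurable (hmarg l) (integrableOn_Icc_one_sub_pow n)

lemma integral_sum_one_sub_pow
    (hmarg : ∀ l, μ.map (fun v => v l) = volume.restrict (Icc 0 1)) (A : Finset ι) (n : ℕ) :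
    ∫ v, ∑ l ∈ A, (1 - v l) ^ n ∂μ = #A / (n + 1) := by
  rw [integral_finsetSum A fun l _ => integrable_comp_of_map_eq_restrict
    (measurable_pi_apply l).aemeasurable (hmarg l) (integrableOn_Icc_one_sub_pow n)]
  simp_rw [integral_comp_of_map_eq_restrict (measurable_pi_apply _).aemeasurable (hmarg _)
    (integrableOn_Icc_one_sub_pow n), integral_Icc_one_sub_pow]
  simp [div_eq_mul_inv]

end

theorem abs_I_le_one_general
    {d : ℕ} (μ : Measure (Fin d → ℝ))
    (hmarg : ∀ l : Fin d, μ.map (fun v => v l) = volume.restrict (Set.Icc (0:ℝ) 1))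
    (A : Finset (Fin d))
    (u : Fin d → ℝ) (hu : ∀ j, u j ∈ Set.Icc (0:ℝ) 1) :
    |(∏ l ∈ A, (1 - u l))
        - ∫ v, ∑ j ∈ A, (∏ l ∈ A.erase j, (1 - v l))
            * (if u j ≤ v j then (1:ℝ) else 0) ∂μ| ≤ 1 := by
  have hcube : ∀ᵐ v ∂μ, ∀ l, v l ∈ Icc (0 : ℝ) 1 :=
    ae_all_iff.2 fun l =>
      ae_mem_of_map_eq_restrict (measurable_pi_apply l).aemeasurable measurableSet_Icc (hmarg l)
  have hbounds : ∀ᵐ v ∂μ, ∑ j ∈ A, (∏ l ∈ A.erase j, (1 - v l))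
      * (if u j ≤ v j then (1:ℝ) else 0) ∈ Set.Icc 0 (∑ l ∈ A, (1 - v l) ^ (#A - 1)) := by
    filter_upwards [hcube] with v hv
    exact sum_prod_erase_mul_mem_Icc A (fun l _ => sub_nonneg.2 (hv l).2)
      fun j _ => by split_ifs <;> simp
  have hnonneg := hbounds.mono fun v hv => hv.1
  refine abs_sub_le_of_nonneg_of_le (prod_nonneg fun l _ => sub_nonneg.2 (hu l).2)
    (prod_le_one (fun l _ => sub_nonneg.2 (hu l).2) fun l _ => by linarith [(hu l).1])
    (integral_nonneg_of_ae hnonneg) ?_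
  calc _ ≤ ∫ v, ∑ l ∈ A, (1 - v l) ^ (#A - 1) ∂μ := integral_mono_of_nonneg hnonneg
        (integrable_sum_one_sub_pow hmarg A _) (hbounds.mono fun v hv => hv.2)
    _ = #A / ((#A - 1 : ℕ) + 1) := integral_sum_one_sub_pow hmarg A _
    _ ≤ 1 := div_le_one_of_le₀ (by exact_mod_cast (by omega : #A ≤ #A - 1 + 1)) (by positivity)

/-- For a copula measure `μ` on `[0,1]^d` (uniform margins) and a nonempty
`A ⊆ {1,…,d}`, the function `I_{μ,A}` is bounded by `1` in absolute value on the
cube. -/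
theorem abs_I_le_one
    {d : ℕ} (μ : Measure (Fin d → ℝ)) [IsProbabilityMeasure μ]
    (hmarg : ∀ l : Fin d, μ.map (fun v => v l) = volume.restrict (Set.Icc (0:ℝ) 1))
    (A : Finset (Fin d)) (hA : A.Nonempty)
    (u : Fin d → ℝ) (hu : ∀ j, u j ∈ Set.Icc (0:ℝ) 1) :
    |(∏ l ∈ A, (1 - u l))
        - ∫ v, ∑ j ∈ A, (∏ l ∈ A.erase j, (1 - v l))
            * (if u j ≤ v j then (1:ℝ) else 0) ∂μ| ≤ 1 :=
  abs_I_le_one_general μ hmarg A u hu
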